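/- Let α : I → ℝ^{m+1} be a C² regular curve parametrized by arc-length equipped with a rotation minimizing frame {t, n₁, …, n_m} satisfying t' = Σᵢ κᵢnᵢ and nᵢ' = −κᵢt. Then α lies on a sphere of radius r if and only if its normal development curve (κ₁(s), …, κ_m(s)) lies on a hyperplane not passing through the origin, and the distance of this hyperplane from the origin is 1/r. -/

import Mathlib

/-!
If `|α - P| = r`, differentiating gives `t ⟂ α - P`; since `nᵢ'` is parallel to `t`, the
coordinates `aᵢ = ⟨nᵢ, α - P⟩` are then constant, differentiating `⟨t, α - P⟩ = 0` gives
`Σ aᵢκᵢ + 1 = 0`, and Parseval in the frame `{t, n₁, …, n_m}` gives `Σ aᵢ² = r²`.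
Conversely, if `Σ aᵢκᵢ + 1 = 0` then `α - Σ aᵢnᵢ` has derivative `(1 + Σ aᵢκᵢ) t = 0`, so it
is a fixed centre `P`, and `|α - P|² = |Σ aᵢnᵢ|² = Σ aᵢ²`.
-/

noncomputable def edot {n : ℕ} (x y : Fin n → ℝ) : ℝ := ∑ i, x i * y i

open Matrix

theorem HasDerivAt.dotProduct {𝕜 ι : Type*} [NontriviallyNormedField 𝕜] [Fintype ι]
    {f g : 𝕜 → ι → 𝕜} {f' g' : ι → 𝕜} {s : 𝕜}
    (hf : HasDerivAt f f' s) (hg : HasDerivAt g g' s) :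
    HasDerivAt (fun u => f u ⬝ᵥ g u) (f' ⬝ᵥ g s + f s ⬝ᵥ g') s := by
  have h : HasDerivAt (fun u => f u ⬝ᵥ g u) (∑ i, (f' i * g s i + f s i * g' i)) s :=
    HasDerivAt.fun_sum fun i _ => (hasDerivAt_pi.mp hf i).fun_mul (hasDerivAt_pi.mp hg i)
  rwa [Finset.sum_add_distrib] at h

theorem sum_sq_dotProduct_of_orthonormal {R ι : Type*} [CommRing R] [Fintype ι] [DecidableEq ι]
    (b : ι → ι → R) (hb : ∀ k l, b k ⬝ᵥ b l = if k = l then 1 else 0) (v : ι → R) :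
    ∑ k, (b k ⬝ᵥ v) ^ 2 = v ⬝ᵥ v := by
  set M : Matrix ι ι R := Matrix.of b
  have hMMt : M * Mᵀ = 1 := by
    ext k l
    exact hb k l
  -- a square matrix with orthonormal rows also has orthonormal columns
  have hMtM : Mᵀ * M = 1 := mul_eq_one_comm.mp hMMt
  calc ∑ k, (b k ⬝ᵥ v) ^ 2 = (M *ᵥ v) ⬝ᵥ (M *ᵥ v) := by simp only [sq]; rfl
    _ = v ⬝ᵥ v := by
      rw [dotProduct_mulVec, ← vecMul_transpose, vecMul_vecMul, hMtM, vecMul_one]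

theorem sum_smul_dotProduct_sum_smul_of_orthonormal {R ι κ : Type*} [CommRing R] [Fintype ι]
    [DecidableEq ι] [Fintype κ] (b : ι → κ → R) (hb : ∀ i j, b i ⬝ᵥ b j = if i = j then 1 else 0)
    (a : ι → R) : (∑ i, a i • b i) ⬝ᵥ (∑ i, a i • b i) = ∑ i, a i ^ 2 := by
  simp [sum_dotProduct, dotProduct_sum, hb, sq]

theorem dotProduct_cons_cons {R ι : Type*} [CommRing R] [Fintype ι] {N : ℕ}
    (t : ι → R) (n : Fin N → ι → R) (htt : t ⬝ᵥ t = 1) (htn : ∀ i, t ⬝ᵥ n i = 0)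
    (hnn : ∀ i j, n i ⬝ᵥ n j = if i = j then 1 else 0) (k l : Fin (N + 1)) :
    (Fin.cons t n : Fin (N + 1) → ι → R) k ⬝ᵥ (Fin.cons t n : Fin (N + 1) → ι → R) l =
      if k = l then 1 else 0 := by
  cases k using Fin.cases <;> cases l using Fin.cases
  · simpa using htt
  · simpa [(Fin.succ_ne_zero _).symm] using htn _
  · simpa [dotProduct_comm] using htn _
  · simpa [Fin.succ_inj] using hnn _ _

theorem HasDerivAt.eq_zero_of_forall_eq {F : Type*} [NormedAddCommGroup F] [NormedSpace ℝ F]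
    {f : ℝ → F} {f' c : F} {s : ℝ} (hf : HasDerivAt f f' s) (hc : ∀ u, f u = c) : f' = 0 := by
  rw [← hf.deriv, funext hc, deriv_const]

theorem eq_of_forall_hasDerivAt_zero {F : Type*} [NormedAddCommGroup F] [NormedSpace ℝ F]
    {f : ℝ → F} (hf : ∀ s, HasDerivAt f 0 s) (s u : ℝ) : f s = f u :=
  is_const_of_deriv_eq_zero (fun s => (hf s).differentiableAt) (fun s => (hf s).deriv) s u

section SphericalCurve

variable {m : ℕ} {α t : ℝ → Fin (m + 1) → ℝ} {n : Fin m → ℝ → Fin (m + 1) → ℝ}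
  {κ : Fin m → ℝ → ℝ} {P : Fin (m + 1) → ℝ} {r : ℝ}

theorem tangent_dotProduct_sub_center_eq_zero (hα : ∀ s, HasDerivAt α (t s) s)
    (hP : ∀ s, (α s - P) ⬝ᵥ (α s - P) = r ^ 2) (s : ℝ) : t s ⬝ᵥ (α s - P) = 0 := by
  have hv := (hα s).sub_const P
  have h := (hv.dotProduct hv).eq_zero_of_forall_eq hP
  rw [dotProduct_comm (α s - P)] at h
  linarith

theorem normal_dotProduct_sub_center_eq (hα : ∀ s, HasDerivAt α (t s) s)
    (hn : ∀ i s, HasDerivAt (n i) (-(κ i s) • t s) s) (htn : ∀ i s, t s ⬝ᵥ n i s = 0)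
    (hP : ∀ s, (α s - P) ⬝ᵥ (α s - P) = r ^ 2) (i : Fin m) (s u : ℝ) :
    n i s ⬝ᵥ (α s - P) = n i u ⬝ᵥ (α u - P) := by
  refine eq_of_forall_hasDerivAt_zero (f := fun s => n i s ⬝ᵥ (α s - P)) (fun s => ?_) s u
  have h := (hn i s).dotProduct ((hα s).sub_const P)
  rwa [smul_dotProduct, tangent_dotProduct_sub_center_eq_zero hα hP, dotProduct_comm, htn,
    smul_zero, add_zero] at h

theorem sum_normal_dotProduct_sub_center_mul_add_one_eq_zero (hα : ∀ s, HasDerivAt α (t s) s)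
    (ht : ∀ s, HasDerivAt t (∑ i, κ i s • n i s) s) (htt : ∀ s, t s ⬝ᵥ t s = 1)
    (hP : ∀ s, (α s - P) ⬝ᵥ (α s - P) = r ^ 2) (s : ℝ) :
    ∑ i, (n i s ⬝ᵥ (α s - P)) * κ i s + 1 = 0 := by
  have h := ((ht s).dotProduct ((hα s).sub_const P)).eq_zero_of_forall_eq
    (tangent_dotProduct_sub_center_eq_zero hα hP)
  simpa only [sum_dotProduct, smul_dotProduct, htt, smul_eq_mul, mul_comm] using h

theorem exists_hyperplane_of_sphere (hα : ∀ s, HasDerivAt α (t s) s)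
    (ht : ∀ s, HasDerivAt t (∑ i, κ i s • n i s) s)
    (hn : ∀ i s, HasDerivAt (n i) (-(κ i s) • t s) s) (htt : ∀ s, t s ⬝ᵥ t s = 1)
    (hnn : ∀ i j s, n i s ⬝ᵥ n j s = if i = j then 1 else 0) (htn : ∀ i s, t s ⬝ᵥ n i s = 0)
    (hP : ∀ s, (α s - P) ⬝ᵥ (α s - P) = r ^ 2) :
    ∃ a : Fin m → ℝ, (∀ s, ∑ i, a i * κ i s + 1 = 0) ∧ ∑ i, a i ^ 2 = r ^ 2 := by
  refine ⟨fun i => n i 0 ⬝ᵥ (α 0 - P), fun s => ?_, ?_⟩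
  · simp_rw [← normal_dotProduct_sub_center_eq hα hn htn hP _ s 0]
    exact sum_normal_dotProduct_sub_center_mul_add_one_eq_zero hα ht htt hP s
  · -- Parseval at `s = 0`, where the `t`-coordinate of `α - P` vanishes.
    have h := sum_sq_dotProduct_of_orthonormal _
      (dotProduct_cons_cons (t 0) (fun i => n i 0) (htt 0) (htn · 0) (hnn · · 0)) (α 0 - P)
    rw [Fin.sum_univ_succ, Fin.cons_zero, tangent_dotProduct_sub_center_eq_zero hα hP,
      hP 0] at h
    simpa using h

theorem exists_sphere_of_hyperplane (hα : ∀ s, HasDerivAt α (t s) s)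
    (hn : ∀ i s, HasDerivAt (n i) (-(κ i s) • t s) s)
    (hnn : ∀ i j s, n i s ⬝ᵥ n j s = if i = j then 1 else 0) {a : Fin m → ℝ}
    (ha : ∀ s, ∑ i, a i * κ i s + 1 = 0) (har : ∑ i, a i ^ 2 = r ^ 2) :
    ∃ P, ∀ s, (α s - P) ⬝ᵥ (α s - P) = r ^ 2 := by
  have hcenter : ∀ s, HasDerivAt (fun u => α u - ∑ i, a i • n i u) 0 s := by
    intro s
    have h := (hα s).sub (HasDerivAt.fun_sum (u := Finset.univ) fun i _ =>
      (hn i s).const_smul (a i))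
    have hzero : t s - ∑ i, a i • -κ i s • t s = (∑ i, a i * κ i s + 1) • t s := by
      simp only [smul_smul, mul_neg, ← Finset.sum_smul, Finset.sum_neg_distrib]
      module
    rwa [hzero, ha, zero_smul] at h
  refine ⟨α 0 - ∑ i, a i • n i 0, fun s => ?_⟩
  rw [← eq_of_forall_hasDerivAt_zero hcenter s 0, sub_sub_cancel,
    sum_smul_dotProduct_sum_smul_of_orthonormal _ (hnn · · s), har]

end SphericalCurve

theorem stmt2_general {m : ℕ} (α : ℝ → Fin (m + 1) → ℝ) (t : ℝ → Fin (m + 1) → ℝ)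
    (n : Fin m → ℝ → Fin (m + 1) → ℝ) (κ : Fin m → ℝ → ℝ) (r : ℝ)
    (hα : ContDiff ℝ 2 α)
    (ht : ∀ s, t s = deriv α s)
    (htt : ∀ s, edot (t s) (t s) = 1)
    (hnn : ∀ i j s, edot (n i s) (n j s) = if i = j then 1 else 0)
    (htn : ∀ i s, edot (t s) (n i s) = 0)
    (hdiffn : ∀ i, Differentiable ℝ (n i))
    (hdt : ∀ s, deriv t s = ∑ i, κ i s • n i s)
    (hdn : ∀ i s, deriv (n i) s = -(κ i s) • t s) :
    (∃ P : Fin (m + 1) → ℝ, ∀ s, edot (α s - P) (α s - P) = r ^ 2) ↔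
      ∃ a : Fin m → ℝ, (∀ s, (∑ i, a i * κ i s) + 1 = 0) ∧ (∑ i, (a i) ^ 2) = r ^ 2 := by
  have ht_eq : t = deriv α := funext ht
  have hα' : ∀ s, HasDerivAt α (t s) s := fun s =>
    ht s ▸ (hα.differentiable (by norm_num) s).hasDerivAt
  have ht' : ∀ s, HasDerivAt t (∑ i, κ i s • n i s) s := fun s =>
    hdt s ▸ ((ht_eq ▸ hα.differentiable_deriv_two) s).hasDerivAt
  have hn' : ∀ i s, HasDerivAt (n i) (-(κ i s) • t s) s := fun i s =>
    hdn i s ▸ (hdiffn i s).hasDerivAt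
  -- `edot` is definitionally `⬝ᵥ`, so the hypotheses are passed to the lemmas as they are.
  exact ⟨fun ⟨P, hP⟩ => exists_hyperplane_of_sphere hα' ht' hn' htt hnn htn hP,
    fun ⟨a, ha, har⟩ => exists_sphere_of_hyperplane hα' hn' hnn ha har⟩

/-- A unit-speed curve in `ℝ^{m+1}` with a rotation minimizing frame `{t, n₁, …, n_m}`
lies on a sphere of radius `r` iff its normal development `(κ₁, …, κ_m)` lies on a
hyperplane not through the origin whose distance from the origin is `1/r`
(after rescaling, `Σ aᵢκᵢ + 1 = 0` with `Σ aᵢ² = r²`). -/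
theorem stmt2 {m : ℕ} (α : ℝ → Fin (m + 1) → ℝ) (t : ℝ → Fin (m + 1) → ℝ)
    (n : Fin m → ℝ → Fin (m + 1) → ℝ) (κ : Fin m → ℝ → ℝ) (r : ℝ) (hr : 0 < r)
    (hα : ContDiff ℝ 2 α)
    (ht : ∀ s, t s = deriv α s)
    (htt : ∀ s, edot (t s) (t s) = 1)
    (hnn : ∀ i j s, edot (n i s) (n j s) = if i = j then 1 else 0)
    (htn : ∀ i s, edot (t s) (n i s) = 0)
    (hdiffn : ∀ i, Differentiable ℝ (n i))
    (hdt : ∀ s, deriv t s = ∑ i, κ i s • n i s)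
    (hdn : ∀ i s, deriv (n i) s = -(κ i s) • t s) :
    (∃ P : Fin (m + 1) → ℝ, ∀ s, edot (α s - P) (α s - P) = r ^ 2) ↔
      ∃ a : Fin m → ℝ, (∀ s, (∑ i, a i * κ i s) + 1 = 0) ∧ (∑ i, (a i) ^ 2) = r ^ 2 :=
  stmt2_general α t n κ r hα ht htt hnn htn hdiffn hdt hdn
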